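/- Let 𝓘 be the family of maximum feasible sets of A (extended with a_0 = 0) and let ⊲ be the relation on 𝓘 induced by the patience sorting piles. If I, J, J' ∈ 𝓘 satisfy J ⊲ I, J' ⊲ I, and J ≠ J', then at least one of the following holds: J' ⊲ J, or J ⊲ J', or there exists J'' ∈ 𝓘 with J'' ⊲ J and J'' ⊲ J'. -/

import Mathlib

/-!
Write `J = I - v + u` and `J' = I - v' + u'`, where `u` lies below `v` and `u'` below `v'` in
their piles. Each pile, read from the top, has decreasing indices and increasing values, and the
piles partition the indices. If `v = v'`, then `u` and `u'` share a pile, so one lies below the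
other and the corresponding swap relates `J` and `J'`. If `v ≠ v'`, then `u ≠ u'`, since two
elements of the increasing subsequence `I` never share a pile, and `J'' = I - v - v' + u + u'` is
again increasing, of the same size, and one swap below both `J` and `J'`.
-/

/-- One step of patience sorting: place index `i` (with value `a i`) on the
leftmost pile whose current top element is greater than `a i`, or start a
new pile at the right end if no such pile exists.  Each pile is a list of
indices with the head being the top (most recently placed) element. -/
def place (a : ℕ → ℕ) : List (List ℕ) → ℕ → List (List ℕ)
  | [], i => [[i]]
  | p :: ps, i => if a i < a p.headI then (i :: p) :: ps else p :: place a ps i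

/-- The (nonempty) piles obtained by patience sorting, processing the values
`a i` for `i ∈ idxs` in order. -/
def pilesOf (a : ℕ → ℕ) (idxs : List ℕ) : List (List ℕ) :=
  idxs.foldl (place a) []

/-- `I` is the index set of an increasing subsequence of `a`. -/
def Feasible (a : ℕ → ℕ) (I : Finset ℕ) : Prop :=
  ∀ i ∈ I, ∀ j ∈ I, i < j → a i < a j

/-- A maximum feasible set for the sequence `a₀ = 0, a₁, …, aₙ`:
a feasible subset of the index set `{0, 1, …, n}` of largest cardinality. -/
def MaxFeasible (a : ℕ → ℕ) (n : ℕ) (I : Finset ℕ) : Prop :=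
  I ⊆ Finset.range (n + 1) ∧ Feasible a I ∧
    ∀ J ⊆ Finset.range (n + 1), Feasible a J → J.card ≤ I.card

/-- `u` is placed strictly below `v` in one of the piles: some pile (a list of
indices whose head is the top) has `v` at an earlier position than `u`. -/
def Below (piles : List (List ℕ)) (u v : ℕ) : Prop :=
  ∃ p ∈ piles, ∃ k l : ℕ, k < l ∧ p[k]? = some v ∧ p[l]? = some u

/-- The relation `I ⊲ J` on maximum feasible sets: `I \ J = {u}`,
`J \ I = {v}`, and `a u` is placed strictly below `a v` in the same pile of
the patience sorting of `a₀ = 0, a₁, …, aₙ`. -/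
def PileLT (a : ℕ → ℕ) (n : ℕ) (I J : Finset ℕ) : Prop :=
  ∃ u v : ℕ, I \ J = {u} ∧ J \ I = {v} ∧
    Below (pilesOf a (List.range (n + 1))) u v

/-- One step of `⊲` within the family of maximum feasible sets. -/
def StepLT (a : ℕ → ℕ) (n : ℕ) (I J : Finset ℕ) : Prop :=
  MaxFeasible a n I ∧ MaxFeasible a n J ∧ PileLT a n I J

/-- `J ∈ M(I)`: membership in the lower set of `I` in the transitive closure
of `⊲` within the family of maximum feasible sets; equivalently, `M(I)` is the
smallest family containing `I` and closed under taking `⊲`-smaller sets. -/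
def InLowerSet (a : ℕ → ℕ) (n : ℕ) (J I : Finset ℕ) : Prop :=
  Relation.ReflTransGen (StepLT a n) J I

/-- `I` is `⊲`-minimal among maximum feasible sets. -/
def MinimalLT (a : ℕ → ℕ) (n : ℕ) (I : Finset ℕ) : Prop :=
  ∀ J : Finset ℕ, MaxFeasible a n J → ¬ PileLT a n J I


section Below

variable {piles : List (List ℕ)} {u v u' v' : ℕ}

theorem Below.exists_pile (h : Below piles u v) : ∃ p ∈ piles, u ∈ p ∧ v ∈ p := by
  obtain ⟨p, hp, k, l, -, hk, hl⟩ := h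
  exact ⟨p, hp, List.mem_of_getElem? hl, List.mem_of_getElem? hk⟩

theorem below_or_below_of_mem_pile {p : List ℕ} {x y : ℕ} (hp : p ∈ piles)
    (hx : x ∈ p) (hy : y ∈ p) (hxy : x ≠ y) : Below piles x y ∨ Below piles y x := by
  obtain ⟨k, hk⟩ := List.mem_iff_getElem?.mp hx
  obtain ⟨l, hl⟩ := List.mem_iff_getElem?.mp hy
  rcases lt_trichotomy k l with hkl | rfl | hkl
  · exact Or.inr ⟨p, hp, k, l, hkl, hk, hl⟩
  · exact absurd (Option.some_injective _ (hk.symm.trans hl)) hxy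
  · exact Or.inl ⟨p, hp, l, k, hkl, hl, hk⟩

theorem pile_eq_of_mem_of_mem {p p' : List ℕ} {x : ℕ} (hnd : piles.flatten.Nodup)
    (hp : p ∈ piles) (hp' : p' ∈ piles) (hx : x ∈ p) (hx' : x ∈ p') : p = p' := by
  by_contra hne
  have : Std.Symm (List.Disjoint (α := ℕ)) := ⟨fun _ _ h => h.symm⟩
  exact (List.nodup_flatten.mp hnd).2.forall hp hp' hne hx hx'

theorem Below.below_or_below_of_below (hnd : piles.flatten.Nodup) (h : Below piles u v)
    (h' : Below piles u' v) (hne : u ≠ u') : Below piles u u' ∨ Below piles u' u := by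
  obtain ⟨p, hp, hu, hv⟩ := h.exists_pile
  obtain ⟨p', hp', hu', hv'⟩ := h'.exists_pile
  obtain rfl := pile_eq_of_mem_of_mem hnd hp hp' hv hv'
  exact below_or_below_of_mem_pile hp hu hu' hne

theorem Below.below_or_below_of_below_right (hnd : piles.flatten.Nodup)
    (h : Below piles u v) (h' : Below piles u v') (hne : v ≠ v') :
    Below piles v v' ∨ Below piles v' v := by
  obtain ⟨p, hp, hu, hv⟩ := h.exists_pile
  obtain ⟨p', hp', hu', hv'⟩ := h'.exists_pile
  obtain rfl := pile_eq_of_mem_of_mem hnd hp hp' hu hu'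
  exact below_or_below_of_mem_pile hp hv hv' hne

theorem Below.rel {R : ℕ → ℕ → Prop} (hR : ∀ p ∈ piles, p.Pairwise R)
    (h : Below piles u v) : R v u := by
  obtain ⟨p, hp, k, l, hkl, hk, hl⟩ := h
  obtain ⟨hkp, rfl⟩ := List.getElem?_eq_some_iff.mp hk
  obtain ⟨hlp, rfl⟩ := List.getElem?_eq_some_iff.mp hl
  exact List.pairwise_iff_getElem.mp (hR p hp) k l hkp hlp hkl

end Below

section PatienceSorting

variable (a : ℕ → ℕ)

theorem flatten_place_perm (piles : List (List ℕ)) (i : ℕ) :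
    (place a piles i).flatten.Perm (i :: piles.flatten) := by
  induction piles with
  | nil => simp [place]
  | cons p ps ih =>
    rw [place]
    split_ifs
    · simp
    · simpa using (ih.append_left p).trans List.perm_middle

theorem pilesOf_range_succ (m : ℕ) :
    pilesOf a (List.range (m + 1)) = place a (pilesOf a (List.range m)) m := by
  simp [pilesOf, List.range_succ, List.foldl_append]

theorem flatten_pilesOf_range_perm (m : ℕ) :
    (pilesOf a (List.range m)).flatten.Perm (List.range m) := by
  induction m with
  | zero => simp [pilesOf]
  | succ m ih =>
    rw [pilesOf_range_succ, List.range_succ]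
    exact ((flatten_place_perm a _ m).trans (ih.cons m)).trans
      (List.perm_append_singleton m _).symm

theorem nodup_flatten_pilesOf_range (m : ℕ) : (pilesOf a (List.range m)).flatten.Nodup :=
  (flatten_pilesOf_range_perm a m).nodup_iff.mpr List.nodup_range

/-- Within a pile, listed from the top, indices decrease and values increase. -/
theorem pairwise_place {piles : List (List ℕ)} {m : ℕ} (hlt : ∀ p ∈ piles, ∀ x ∈ p, x < m)
    (hpw : ∀ p ∈ piles, p.Pairwise (fun x y => y < x ∧ a x < a y)) :
    ∀ p ∈ place a piles m, p.Pairwise (fun x y => y < x ∧ a x < a y) := by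
  induction piles with
  | nil => simp [place]
  | cons q qs ih =>
    simp only [List.forall_mem_cons] at hlt hpw
    rw [place]
    split_ifs with hc
    · have htop : ∀ y ∈ q, a m < a y := by
        rcases q with _ | ⟨z, t⟩
        · simp
        · simp only [List.headI] at hc
          simp only [List.forall_mem_cons]
          exact ⟨hc, fun y hy => hc.trans ((List.pairwise_cons.mp hpw.1).1 y hy).2⟩
      simp only [List.forall_mem_cons, List.pairwise_cons]
      exact ⟨⟨fun y hy => ⟨hlt.1 y hy, htop y hy⟩, hpw.1⟩, hpw.2⟩
    · simp only [List.forall_mem_cons]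
      exact ⟨hpw.1, ih hlt.2 hpw.2⟩

theorem pairwise_pilesOf_range (m : ℕ) :
    ∀ p ∈ pilesOf a (List.range m), p.Pairwise (fun x y => y < x ∧ a x < a y) := by
  induction m with
  | zero => simp [pilesOf]
  | succ m ih =>
    rw [pilesOf_range_succ]
    refine pairwise_place a (fun p hp x hx => ?_) ih
    have := (flatten_pilesOf_range_perm a m).subset (List.mem_flatten_of_mem hp hx)
    simpa using this

theorem Below.lt_of_pilesOf_range {m u v : ℕ} (h : Below (pilesOf a (List.range m)) u v) :
    u < v ∧ a v < a u :=
  h.rel (pairwise_pilesOf_range a m)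

end PatienceSorting

section MaxFeasible

variable {a : ℕ → ℕ} {n : ℕ} {K : Finset ℕ} {x y : ℕ}

theorem Feasible.mono {K' : Finset ℕ} (h : Feasible a K) (hsub : K' ⊆ K) : Feasible a K' :=
  fun i hi j hj => h i (hsub hi) j (hsub hj)

theorem Feasible.insert (h : Feasible a K) (hy : ∀ x ∈ K, Feasible a {x, y}) :
    Feasible a (insert y K) := by
  intro i hi j hj hij
  rcases Finset.mem_insert.mp hi with rfl | hiK
  · rcases Finset.mem_insert.mp hj with rfl | hjK
    · exact absurd hij (lt_irrefl _)
    · exact hy j hjK i (by simp) j (by simp) hij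
  · rcases Finset.mem_insert.mp hj with rfl | hjK
    · exact hy i hiK i (by simp) j (by simp) hij
    · exact h i hiK j hjK hij

theorem MaxFeasible.insert_erase (hK : MaxFeasible a n K) (hx : x ∈ K) (hy : y ∉ K)
    (hyn : y ∈ Finset.range (n + 1)) (hf : Feasible a (insert y (K.erase x))) :
    MaxFeasible a n (insert y (K.erase x)) := by
  have hcard : (insert y (K.erase x)).card = K.card := by
    rw [Finset.card_insert_of_notMem (fun h => hy (Finset.mem_of_mem_erase h)),
      Finset.card_erase_add_one hx]
  refine ⟨Finset.insert_subset hyn ((K.erase_subset x).trans hK.1), hf, ?_⟩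
  rw [hcard]
  exact hK.2.2

end MaxFeasible

section PileLT

variable {a : ℕ → ℕ} {n : ℕ} {I K : Finset ℕ} {u v u' v' : ℕ}

theorem PileLT.exists_eq_insert_erase {J : Finset ℕ} (h : PileLT a n J I) :
    ∃ u v, v ∈ I ∧ u ∉ I ∧ Below (pilesOf a (List.range (n + 1))) u v ∧
      J = insert u (I.erase v) := by
  obtain ⟨u, v, hJI, hIJ, hb⟩ := h
  have hu := Finset.ext_iff.mp hJI
  have hv := Finset.ext_iff.mp hIJ
  refine ⟨u, v, (Finset.mem_sdiff.mp ((hv v).mpr (Finset.mem_singleton_self v))).1,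
    (Finset.mem_sdiff.mp ((hu u).mpr (Finset.mem_singleton_self u))).2, hb, ?_⟩
  ext x
  simp only [Finset.mem_sdiff, Finset.mem_singleton] at hu hv
  simp only [Finset.mem_insert, Finset.mem_erase]
  grind

theorem pileLT_insert_erase (hv : v ∈ K) (hu : u ∉ K)
    (hb : Below (pilesOf a (List.range (n + 1))) u v) :
    PileLT a n (insert u (K.erase v)) K := by
  refine ⟨u, v, ?_, ?_, hb⟩ <;> ext x <;>
    simp only [Finset.mem_sdiff, Finset.mem_insert, Finset.mem_erase, Finset.mem_singleton] <;>
    grind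

theorem pileLT_insert_insert (hu : u ∉ K) (hu' : u' ∉ K)
    (hb : Below (pilesOf a (List.range (n + 1))) u u') :
    PileLT a n (insert u K) (insert u' K) := by
  have hne : u ≠ u' := (hb.lt_of_pilesOf_range a).1.ne
  have := pileLT_insert_erase (K := insert u' K) (Finset.mem_insert_self u' K)
    (by simp [hu, hne]) hb
  rwa [Finset.erase_insert hu'] at this

end PileLT

section Diamond

variable {a : ℕ → ℕ} {n : ℕ} {I : Finset ℕ} {u v u' v' : ℕ}

theorem pileLT_or_pileLT_of_below_same (hu : u ∉ I) (hu' : u' ∉ I)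
    (hb : Below (pilesOf a (List.range (n + 1))) u v)
    (hb' : Below (pilesOf a (List.range (n + 1))) u' v) (hne : u ≠ u') :
    PileLT a n (insert u' (I.erase v)) (insert u (I.erase v)) ∨
      PileLT a n (insert u (I.erase v)) (insert u' (I.erase v)) := by
  have hnotmem {w : ℕ} (hw : w ∉ I) : w ∉ I.erase v := fun h => hw (Finset.mem_of_mem_erase h)
  rcases hb.below_or_below_of_below (nodup_flatten_pilesOf_range a _) hb' hne with h | h
  · exact Or.inr (pileLT_insert_insert (hnotmem hu) (hnotmem hu') h)
  · exact Or.inl (pileLT_insert_insert (hnotmem hu') (hnotmem hu) h)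

theorem exists_pileLT_pileLT_of_ne (hI : Feasible a I)
    (hJ : MaxFeasible a n (insert u (I.erase v)))
    (hJ' : MaxFeasible a n (insert u' (I.erase v')))
    (hv : v ∈ I) (hv' : v' ∈ I) (hu : u ∉ I) (hu' : u' ∉ I)
    (hb : Below (pilesOf a (List.range (n + 1))) u v)
    (hb' : Below (pilesOf a (List.range (n + 1))) u' v') (hvv : v ≠ v') :
    ∃ J'' : Finset ℕ, MaxFeasible a n J'' ∧
      PileLT a n J'' (insert u (I.erase v)) ∧ PileLT a n J'' (insert u' (I.erase v')) := by
  have hune : u ≠ u' := by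
    rintro rfl
    rcases hb.below_or_below_of_below_right (nodup_flatten_pilesOf_range a _) hb' hvv with h | h
    · have := h.lt_of_pilesOf_range a
      exact absurd (hI v hv v' hv' this.1) this.2.not_gt
    · have := h.lt_of_pilesOf_range a
      exact absurd (hI v' hv' v hv this.1) this.2.not_gt
  have huv := hb.lt_of_pilesOf_range a
  have hu'v' := hb'.lt_of_pilesOf_range a
  have hv'J : v' ∈ insert u (I.erase v) := by simp [hv', Ne.symm hvv]
  have hvJ' : v ∈ insert u' (I.erase v') := by simp [hv, hvv]
  have hu'J : u' ∉ insert u (I.erase v) := by simp [hu', Ne.symm hune]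
  have huJ' : u ∉ insert u' (I.erase v') := by simp [hu, hune]
  have hswap : insert u' ((insert u (I.erase v)).erase v') =
      insert u ((insert u' (I.erase v')).erase v) := by
    rw [Finset.erase_insert_of_ne (ne_of_mem_of_not_mem hv' hu).symm,
      Finset.erase_insert_of_ne (ne_of_mem_of_not_mem hv hu').symm, Finset.erase_right_comm,
      Finset.insert_comm]
  -- `u < u'` gives `a u < a v' < a u'` through `v' ∈ J`; symmetrically through `v ∈ J'`.
  have hpair : Feasible a {u, u'} := by
    have h1 := hJ.2.1 u (by simp) v' hv'J
    have h2 := hJ'.2.1 u' (by simp) v hvJ'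
    intro i hi j hj hij
    simp only [Finset.mem_insert, Finset.mem_singleton] at hi hj
    rcases hi with rfl | rfl <;> rcases hj with rfl | rfl <;> omega
  have hfeas : Feasible a (insert u' ((insert u (I.erase v)).erase v')) := by
    refine (hJ.2.1.mono (Finset.erase_subset _ _)).insert fun x hx => ?_
    rcases Finset.mem_insert.mp (Finset.mem_of_mem_erase hx) with rfl | hxI
    · exact hpair
    · refine hJ'.2.1.mono (Finset.insert_subset ?_ (by simp))
      simp [Finset.mem_of_mem_erase hxI, Finset.ne_of_mem_erase hx]
  refine ⟨_, hJ.insert_erase hv'J hu'J (hJ'.1 (by simp)) hfeas,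
    pileLT_insert_erase hv'J hu'J hb', ?_⟩
  rw [hswap]
  exact pileLT_insert_erase hvJ' huJ' hb

end Diamond

theorem stmt7_general (n : ℕ) (a : ℕ → ℕ)
    (I J J' : Finset ℕ)
    (hI : MaxFeasible a n I) (hJ : MaxFeasible a n J) (hJ' : MaxFeasible a n J')
    (h1 : PileLT a n J I) (h2 : PileLT a n J' I) (hne : J ≠ J') :
    PileLT a n J' J ∨ PileLT a n J J' ∨
      ∃ J'' : Finset ℕ, MaxFeasible a n J'' ∧
        PileLT a n J'' J ∧ PileLT a n J'' J' := by
  obtain ⟨u, v, hv, hu, hb, rfl⟩ := h1.exists_eq_insert_erase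
  obtain ⟨u', v', hv', hu', hb', rfl⟩ := h2.exists_eq_insert_erase
  rcases eq_or_ne v v' with rfl | hvv
  · have hune : u ≠ u' := by rintro rfl; exact hne rfl
    rcases pileLT_or_pileLT_of_below_same hu hu' hb hb' hune with h | h
    · exact Or.inl h
    · exact Or.inr (Or.inl h)
  · exact Or.inr (Or.inr (exists_pileLT_pileLT_of_ne hI.2.1 hJ hJ' hv hv' hu hu' hb hb' hvv))

/-- If `I, J, J'` are maximum feasible sets with `J ⊲ I`, `J' ⊲ I` and
`J ≠ J'`, then `J' ⊲ J`, or `J ⊲ J'`, or some maximum feasible set `J''`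
satisfies `J'' ⊲ J` and `J'' ⊲ J'`. -/
theorem stmt7 (n : ℕ) (a : ℕ → ℕ) (hn : 0 < n) (h0 : a 0 = 0)
    (hmem : ∀ i ∈ Finset.Icc 1 n, a i ∈ Finset.Icc 1 n)
    (hinj : ∀ i ∈ Finset.Icc 1 n, ∀ j ∈ Finset.Icc 1 n, a i = a j → i = j)
    (I J J' : Finset ℕ)
    (hI : MaxFeasible a n I) (hJ : MaxFeasible a n J) (hJ' : MaxFeasible a n J')
    (h1 : PileLT a n J I) (h2 : PileLT a n J' I) (hne : J ≠ J') :
    PileLT a n J' J ∨ PileLT a n J J' ∨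
      ∃ J'' : Finset ℕ, MaxFeasible a n J'' ∧
        PileLT a n J'' J ∧ PileLT a n J'' J' :=
  stmt7_general n a I J J' hI hJ hJ' h1 h2 hne
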